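/- arXiv:1809.05086 — 2 statements merged into one kernel-verified Lean document; each statement's English description precedes it below -/
import Mathlib

section
/- Let κ > 0, 0 ≤ D₀ < √2, and suppose D : [0,∞) → [0,∞) satisfies D(t) ≤ y(t) where y solves y' = −κy + (κ/2)y³, y(0) = D₀. Suppose further that for some differentiable x : [0,∞) → [0,∞) with x(0) = D₀², one has x'(t) ≥ −κ(2 + D(t)²)x(t) and D(t)² ≥ x(t) for all t. Then D(t)² ≥ D₀² e^{−2κt}(1 − ½D₀²(1 − e^{−2κt})) for all t ≥ 0. -/
open Real Set

/-!
Since `D ≤ y`, the function `x` satisfies `x' ≥ -κ (2 + y²) x`. The Bernoulli equation for `y`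
is solved explicitly by `y² A = 2 D₀²` with `A t = (2 - D₀²) e^{2κt} + D₀²`: indeed
`F = y² A - 2 D₀²` solves the linear equation `F' = κ y² F` with `F 0 = 0`, so `F = 0` by
Grönwall. Consequently `E = e^{4κt} / A` satisfies `E' = κ (2 + y²) E`, which makes `x E`
nondecreasing, and `D² ≥ x ≥ x(0) E(0) / E = D₀² / (2 E)` is the claimed bound.
-/

theorem eq_zero_of_hasDerivAt_eq_smul {E : Type*} [NormedAddCommGroup E] [NormedSpace ℝ E]
    {f : ℝ → E} {g : ℝ → ℝ} {a : ℝ} (hf : ∀ t ≥ a, HasDerivAt f (g t • f t) t)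
    (hg : ContinuousOn g (Ici a)) (ha : f a = 0) : ∀ t ≥ a, f t = 0 := by
  intro t ht
  obtain ⟨K, hK⟩ := (isCompact_Icc (a := a) (b := t)).exists_bound_of_continuousOn
    (hg.mono Icc_subset_Ici_self)
  refine eq_zero_of_abs_deriv_le_mul_abs_self_of_eq_zero_right (K := K)
    (fun s hs => (hf s hs.1).continuousAt.continuousWithinAt)
    (fun s hs => (hf s hs.1).hasDerivWithinAt) ha (fun s hs => ?_) t ⟨ht, le_rfl⟩
  rw [norm_smul]
  exact mul_le_mul_of_nonneg_right (hK s (Ico_subset_Icc_self hs)) (norm_nonneg _)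

noncomputable def bernoulliDenom (κ c t : ℝ) : ℝ := (2 - c) * exp (2 * κ * t) + c

theorem bernoulliDenom_zero (κ c : ℝ) : bernoulliDenom κ c 0 = 2 := by
  simp [bernoulliDenom]

theorem bernoulliDenom_pos (κ t : ℝ) {c : ℝ} (hc₀ : 0 ≤ c) (hc : c < 2) :
    0 < bernoulliDenom κ c t := by
  unfold bernoulliDenom
  have := exp_pos (2 * κ * t)
  positivity

theorem hasDerivAt_bernoulliDenom (κ c t : ℝ) :
    HasDerivAt (bernoulliDenom κ c) (2 * κ * (bernoulliDenom κ c t - c)) t := by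
  have h := (((hasDerivAt_id' t).const_mul (2 * κ)).exp.const_mul (2 - c)).add_const c
  refine h.congr_deriv ?_
  simp only [bernoulliDenom]
  ring

theorem sq_mul_bernoulliDenom_eq {κ : ℝ} {y : ℝ → ℝ}
    (hy : ∀ t ≥ (0 : ℝ), HasDerivAt y (-κ * y t + κ / 2 * y t ^ 3) t) :
    ∀ t ≥ (0 : ℝ), y t ^ 2 * bernoulliDenom κ (y 0 ^ 2) t = 2 * y 0 ^ 2 := by
  set A := bernoulliDenom κ (y 0 ^ 2)
  have hF : ∀ t ≥ (0 : ℝ), HasDerivAt (fun s => y s ^ 2 * A s - 2 * y 0 ^ 2)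
      ((κ * y t ^ 2) • (y t ^ 2 * A t - 2 * y 0 ^ 2)) t := by
    intro t ht
    refine ((((hy t ht).fun_pow 2).fun_mul (hasDerivAt_bernoulliDenom κ _ t)).sub_const
      _).congr_deriv ?_
    simp only [smul_eq_mul, A]
    ring
  have hcont : ContinuousOn (fun t => κ * y t ^ 2) (Ici 0) := fun t ht =>
    ((hy t ht).continuousAt.pow 2).const_mul κ |>.continuousWithinAt
  intro t ht
  have := eq_zero_of_hasDerivAt_eq_smul hF hcont (by simp [A, bernoulliDenom_zero]; ring) t ht
  linarith

theorem hasDerivAt_exp_div_bernoulliDenom (κ c t : ℝ) (hA : bernoulliDenom κ c t ≠ 0) :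
    HasDerivAt (fun s => exp (4 * κ * s) / bernoulliDenom κ c s)
      (κ * (2 + 2 * c / bernoulliDenom κ c t) * (exp (4 * κ * t) / bernoulliDenom κ c t)) t := by
  refine ((((hasDerivAt_id' t).const_mul (4 * κ)).exp).fun_div
    (hasDerivAt_bernoulliDenom κ c t) hA).congr_deriv ?_
  field_simp
  ring

theorem monotoneOn_mul_of_deriv_ge_neg_mul {x x' q E : ℝ → ℝ} {a : ℝ}
    (hx : ∀ t ≥ a, HasDerivAt x (x' t) t) (hx' : ∀ t ≥ a, -q t * x t ≤ x' t)
    (hE : ∀ t ≥ a, HasDerivAt E (q t * E t) t) (hE₀ : ∀ t ≥ a, 0 ≤ E t) :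
    MonotoneOn (fun t => x t * E t) (Ici a) := by
  have hd : ∀ t ≥ a, HasDerivAt (fun t => x t * E t) (x' t * E t + x t * (q t * E t)) t :=
    fun t ht => (hx t ht).mul (hE t ht)
  refine monotoneOn_of_hasDerivWithinAt_nonneg (convex_Ici a)
    (fun t ht => (hd t ht).continuousAt.continuousWithinAt)
    (fun t ht => (hd t (interior_subset ht)).hasDerivWithinAt) fun t ht => ?_
  have ht : a ≤ t := interior_subset ht
  nlinarith [mul_le_mul_of_nonneg_right (hx' t ht) (hE₀ t ht)]

theorem div_two_div_exp_div_bernoulliDenom (κ c t : ℝ) :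
    c / 2 / (exp (4 * κ * t) / bernoulliDenom κ c t) =
      c * exp (-2 * κ * t) * (1 - 1 / 2 * c * (1 - exp (-2 * κ * t))) := by
  have h4 : exp (4 * κ * t) = exp (2 * κ * t) * exp (2 * κ * t) := by
    rw [← exp_add]; ring_nf
  have h2 : exp (-2 * κ * t) = (exp (2 * κ * t))⁻¹ := by
    rw [← exp_neg]; ring_nf
  rw [h4, h2, bernoulliDenom]
  field_simp
  ring

/-- lower bound for the support diameter in complete synchronization.
If `D ≤ y` where `y` solves `y' = −κy + (κ/2)y³`, `y(0) = D₀`, and `x` satisfies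
`x' ≥ −κ(2 + D²)x`, `x(0) = D₀²`, `D² ≥ x`, then
`D(t)² ≥ D₀² e^{−2κt}(1 − ½D₀²(1 − e^{−2κt}))` for all `t ≥ 0`. -/
theorem stmt13 (κ D₀ : ℝ) (hκ : 0 < κ) (hD₀ : 0 ≤ D₀) (hD₀' : D₀ < Real.sqrt 2)
    (y D x x' : ℝ → ℝ)
    (hy : ∀ t ≥ (0 : ℝ), HasDerivAt y (-κ * y t + κ / 2 * (y t)^3) t)
    (hy0 : y 0 = D₀)
    (hDpos : ∀ t ≥ (0 : ℝ), 0 ≤ D t)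
    (hDy : ∀ t ≥ (0 : ℝ), D t ≤ y t)
    (hx : ∀ t ≥ (0 : ℝ), HasDerivAt x (x' t) t)
    (hxpos : ∀ t ≥ (0 : ℝ), 0 ≤ x t)
    (hx0 : x 0 = D₀^2)
    (hx' : ∀ t ≥ (0 : ℝ), x' t ≥ -κ * (2 + (D t)^2) * x t)
    (hxD : ∀ t ≥ (0 : ℝ), (D t)^2 ≥ x t) :
    ∀ t ≥ (0 : ℝ), (D t)^2 ≥
      D₀^2 * Real.exp (-2 * κ * t) * (1 - 1/2 * D₀^2 * (1 - Real.exp (-2 * κ * t))) := by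
  have hD₀sq : D₀ ^ 2 < 2 := by
    simpa using pow_lt_pow_left₀ hD₀' hD₀ two_ne_zero
  set A := bernoulliDenom κ (D₀ ^ 2)
  have hA : ∀ t, 0 < A t := fun t => bernoulliDenom_pos κ t (sq_nonneg D₀) hD₀sq
  have hyA : ∀ t ≥ (0 : ℝ), 2 * D₀ ^ 2 / A t = y t ^ 2 := fun t ht => by
    have h := sq_mul_bernoulliDenom_eq hy t ht
    rw [hy0] at h
    rw [div_eq_iff (hA t).ne', h]
  have hx'y : ∀ t ≥ (0 : ℝ), -(κ * (2 + y t ^ 2)) * x t ≤ x' t := fun t ht => by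
    have hD : D t ^ 2 ≤ y t ^ 2 := pow_le_pow_left₀ (hDpos t ht) (hDy t ht) 2
    nlinarith [hx' t ht, mul_le_mul_of_nonneg_left hD (mul_nonneg hκ.le (hxpos t ht))]
  have hE : ∀ t ≥ (0 : ℝ), HasDerivAt (fun s => exp (4 * κ * s) / A s)
      (κ * (2 + y t ^ 2) * (exp (4 * κ * t) / A t)) t := fun t ht => by
    rw [← hyA t ht]
    exact hasDerivAt_exp_div_bernoulliDenom κ (D₀ ^ 2) t (hA t).ne'
  have hE₀ : ∀ t, 0 < exp (4 * κ * t) / A t := fun t => div_pos (exp_pos _) (hA t)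
  have hmono := monotoneOn_mul_of_deriv_ge_neg_mul hx hx'y hE fun t _ => (hE₀ t).le
  intro t ht
  have h := hmono self_mem_Ici ht ht
  simp only [hx0, mul_zero, exp_zero, A, bernoulliDenom_zero] at h
  rw [← div_two_div_exp_div_bernoulliDenom, ge_iff_le, div_le_iff₀ (hE₀ t)]
  calc D₀ ^ 2 / 2 ≤ x t * (exp (4 * κ * t) / A t) := by linarith
    _ ≤ D t ^ 2 * (exp (4 * κ * t) / A t) :=
      mul_le_mul_of_nonneg_right (hxD t ht) (hE₀ t).le
end

section
/- Let α ≥ 0, κ > 0 with κ > (3/2)^{3/2}α, and let y solve y' = α − κy + (κ/2)y³ with y(0) = y₀ ∈ [0, ζ₂(α/κ)). Then y(t) < ζ₂(α/κ) for all t ≥ 0 and y(t) → ζ₁(α/κ) as t → +∞, where ζ₁(η) < ζ₂(η) are the two nonnegative roots of ½z³ − z + η. If y₀ > ζ₁(α/κ) then y is decreasing; if y₀ < ζ₁(α/κ) then y is nondecreasing. -/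
/-!
The root `ζ₁ ≥ 0`, the root `ζ₂ > ζ₁` and, since `½z³ − z + α/κ` has no `z²` term, the root
`−(ζ₁ + ζ₂) < 0` factor the vector field as `(κ/2)(y + ζ₁ + ζ₂)(y − ζ₁)(y − ζ₂)`. For each root `r`
this reads `(y − r)' = q(y)(y − r)`, so `y − r = (y₀ − r) exp ∫ q(y)`: no root is ever crossed.
Hence `y` stays in `(−(ζ₁ + ζ₂), ζ₂)` and between `y₀` and `ζ₁`, a compact subinterval on which the
rate `q` attached to `ζ₁` is bounded by a negative constant; this forces exponential convergence to
`ζ₁`, and the sign of the vector field gives the monotonicity.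
-/

open Real Set Filter Topology

theorem eq_mul_exp_integral_of_hasDerivAt_mul {u g : ℝ → ℝ} (hg : ContinuousOn g (Ici 0))
    (hu : ∀ t ≥ (0 : ℝ), HasDerivAt u (g t * u t) t) {t : ℝ} (ht : 0 ≤ t) :
    u t = u 0 * exp (∫ s in (0 : ℝ)..t, g s) := by
  set G : ℝ → ℝ := fun r => ∫ s in (0 : ℝ)..r, g s
  have hG : ∀ r ≥ (0 : ℝ), HasDerivWithinAt G (g r) (Ici r) r := fun r hr =>
    intervalIntegral.integral_hasDerivWithinAt_right (t := Ioi r)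
      ((hg.mono Icc_subset_Ici_self).intervalIntegrable_of_Icc hr)
      ((hg.stronglyMeasurableAtFilter_nhdsWithin measurableSet_Ici r).filter_mono
        (nhdsWithin_mono _ fun s hs => hr.trans (le_of_lt hs)))
      ((hg r hr).mono fun s hs => hr.trans (le_of_lt hs))
  have hGc : ContinuousOn G (Icc 0 t) := by
    rw [← uIcc_of_le ht]
    exact intervalIntegral.continuousOn_primitive_interval
      ((hg.mono (uIcc_of_le ht ▸ Icc_subset_Ici_self)).integrableOn_compact isCompact_uIcc)
  have hconst : ∀ s ∈ Icc 0 t, u s * exp (-G s) = u 0 * exp (-G 0) := by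
    refine constant_of_has_deriv_right_zero (fun s hs => ?_) (fun s hs => ?_)
    · exact (hu s hs.1).continuousAt.continuousWithinAt.mul (hGc s hs).neg.rexp
    · exact ((hu s hs.1).hasDerivWithinAt.mul (hG s hs.1).neg.exp).congr_deriv (by
        simp only [Pi.neg_apply]; ring)
  have := hconst t ⟨ht, le_rfl⟩
  simp only [G, intervalIntegral.integral_same, neg_zero, exp_zero, mul_one] at this
  rw [← this, mul_assoc, ← exp_add, neg_add_cancel, exp_zero, mul_one]

section RootBarrier

variable {y q : ℝ → ℝ} {r : ℝ}

theorem sub_eq_mul_exp_integral_of_hasDerivAt (hq : Continuous q)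
    (hy : ∀ t ≥ (0 : ℝ), HasDerivAt y (q (y t) * (y t - r)) t) {t : ℝ} (ht : 0 ≤ t) :
    y t - r = (y 0 - r) * exp (∫ s in (0 : ℝ)..t, q (y s)) :=
  eq_mul_exp_integral_of_hasDerivAt_mul (u := fun t => y t - r)
    (hq.comp_continuousOn fun s hs => (hy s hs).continuousAt.continuousWithinAt)
    (fun s hs => (hy s hs).sub_const r) ht

theorem lt_of_hasDerivAt_mul_sub (hq : Continuous q)
    (hy : ∀ t ≥ (0 : ℝ), HasDerivAt y (q (y t) * (y t - r)) t) (h0 : y 0 < r)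
    {t : ℝ} (ht : 0 ≤ t) : y t < r := by
  have := sub_eq_mul_exp_integral_of_hasDerivAt hq hy ht
  nlinarith [exp_pos (∫ s in (0 : ℝ)..t, q (y s))]

theorem gt_of_hasDerivAt_mul_sub (hq : Continuous q)
    (hy : ∀ t ≥ (0 : ℝ), HasDerivAt y (q (y t) * (y t - r)) t) (h0 : r < y 0)
    {t : ℝ} (ht : 0 ≤ t) : r < y t := by
  have := sub_eq_mul_exp_integral_of_hasDerivAt hq hy ht
  nlinarith [exp_pos (∫ s in (0 : ℝ)..t, q (y s))]

theorem abs_sub_le_mul_exp_of_hasDerivAt_mul_sub (hq : Continuous q)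
    (hy : ∀ t ≥ (0 : ℝ), HasDerivAt y (q (y t) * (y t - r)) t) {c t : ℝ} (ht : 0 ≤ t)
    (hc : ∀ s ∈ Icc 0 t, q (y s) ≤ -c) : |y t - r| ≤ |y 0 - r| * exp (-(c * t)) := by
  have hint : ∫ s in (0 : ℝ)..t, q (y s) ≤ -(c * t) := by
    have hqy : ContinuousOn (fun s => q (y s)) (Icc 0 t) :=
      hq.comp_continuousOn fun s hs => (hy s hs.1).continuousAt.continuousWithinAt
    have := intervalIntegral.integral_mono_on ht (hqy.intervalIntegrable_of_Icc ht)
      (intervalIntegrable_const (μ := MeasureTheory.volume)) hc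
    simpa [mul_comm] using this
  rw [sub_eq_mul_exp_integral_of_hasDerivAt hq hy ht, abs_mul, abs_exp]
  gcongr

theorem tendsto_of_hasDerivAt_mul_sub (hq : Continuous q)
    (hy : ∀ t ≥ (0 : ℝ), HasDerivAt y (q (y t) * (y t - r)) t) {c : ℝ} (hc0 : 0 < c)
    (hc : ∀ s ≥ (0 : ℝ), q (y s) ≤ -c) : Tendsto y atTop (𝓝 r) := by
  rw [tendsto_iff_norm_sub_tendsto_zero]
  have hdecay : Tendsto (fun t => |y 0 - r| * exp (-(c * t))) atTop (𝓝 0) := by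
    simpa using (tendsto_exp_neg_atTop_nhds_zero.comp
      (tendsto_id.const_mul_atTop hc0)).const_mul |y 0 - r|
  refine squeeze_zero' (Eventually.of_forall fun t => norm_nonneg _) ?_ hdecay
  filter_upwards [eventually_ge_atTop 0] with t ht
  exact abs_sub_le_mul_exp_of_hasDerivAt_mul_sub hq hy ht fun s hs => hc s hs.1

end RootBarrier

section CubicBarrier

variable {k a b c : ℝ} {y : ℝ → ℝ}

theorem mem_Ioo_of_hasDerivAt_cubic
    (hy : ∀ t ≥ (0 : ℝ), HasDerivAt y (k * (y t - a) * (y t - b) * (y t - c)) t)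
    (hy0 : y 0 ∈ Ioo a c) {t : ℝ} (ht : 0 ≤ t) : y t ∈ Ioo a c :=
  ⟨gt_of_hasDerivAt_mul_sub (q := fun z => k * (z - b) * (z - c)) (by fun_prop)
      (fun s hs => (hy s hs).congr_deriv (by ring)) hy0.1 ht,
    lt_of_hasDerivAt_mul_sub (q := fun z => k * (z - a) * (z - b)) (by fun_prop)
      (fun s hs => (hy s hs).congr_deriv (by ring)) hy0.2 ht⟩

theorem mem_uIcc_of_hasDerivAt_cubic (hk : 0 < k)
    (hy : ∀ t ≥ (0 : ℝ), HasDerivAt y (k * (y t - a) * (y t - b) * (y t - c)) t)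
    (hy0 : y 0 ∈ Ioo a c) {t : ℝ} (ht : 0 ≤ t) : y t ∈ uIcc (y 0) b := by
  have hq : Continuous fun z => k * (z - a) * (z - c) := by fun_prop
  have hyb : ∀ t ≥ (0 : ℝ), HasDerivAt y (k * (y t - a) * (y t - c) * (y t - b)) t :=
    fun s hs => (hy s hs).congr_deriv (by ring)
  have hclose : |y t - b| ≤ |y 0 - b| := by
    have := abs_sub_le_mul_exp_of_hasDerivAt_mul_sub hq hyb ht (c := 0) fun s hs => by
      obtain ⟨has, hsc⟩ := mem_Ioo_of_hasDerivAt_cubic hy hy0 hs.1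
      have : 0 ≤ k * (y s - a) * (c - y s) := by positivity
      linarith
    simpa using this
  rcases lt_trichotomy (y 0) b with hlt | heq | hgt
  · have := lt_of_hasDerivAt_mul_sub hq hyb hlt ht
    rw [uIcc_of_lt hlt]
    constructor <;> cases abs_le.mp (hclose.trans_eq (abs_of_neg (by linarith))) <;> linarith
  · rw [heq, sub_self, abs_zero, abs_nonpos_iff, sub_eq_zero] at hclose
    simp [hclose]
  · have := gt_of_hasDerivAt_mul_sub hq hyb hgt ht
    rw [uIcc_of_gt hgt]
    constructor <;> cases abs_le.mp (hclose.trans_eq (abs_of_pos (by linarith))) <;> linarith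

theorem tendsto_of_hasDerivAt_cubic (hk : 0 < k) (hab : a < b) (hbc : b < c)
    (hy : ∀ t ≥ (0 : ℝ), HasDerivAt y (k * (y t - a) * (y t - b) * (y t - c)) t)
    (hy0 : y 0 ∈ Ioo a c) : Tendsto y atTop (𝓝 b) := by
  set m := min (y 0) b
  set M := max (y 0) b
  have ham : a < m := lt_min hy0.1 hab
  have hMc : M < c := max_lt hy0.2 hbc
  refine tendsto_of_hasDerivAt_mul_sub (q := fun z => k * (z - a) * (z - c)) (by fun_prop)
    (fun s hs => (hy s hs).congr_deriv (by ring)) (by positivity : 0 < k * (m - a) * (c - M))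
    fun s hs => ?_
  obtain ⟨hms, hsM⟩ := mem_uIcc_of_hasDerivAt_cubic hk hy hy0 hs
  have : (m - a) * (c - M) ≤ (y s - a) * (c - y s) :=
    mul_le_mul (by linarith) (by linarith) (by linarith) (by linarith)
  nlinarith

theorem strictMonoOn_of_hasDerivAt_cubic (hk : 0 < k)
    (hy : ∀ t ≥ (0 : ℝ), HasDerivAt y (k * (y t - a) * (y t - b) * (y t - c)) t)
    (hy0 : y 0 ∈ Ioo a c) (hb : y 0 < b) : StrictMonoOn y (Ici 0) := by
  refine strictMonoOn_of_deriv_pos (convex_Ici 0)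
    (fun t ht => (hy t ht).continuousAt.continuousWithinAt) fun t ht => ?_
  rw [interior_Ici] at ht
  obtain ⟨hat, htc⟩ := mem_Ioo_of_hasDerivAt_cubic hy hy0 ht.le
  have htb := lt_of_hasDerivAt_mul_sub (q := fun z => k * (z - a) * (z - c)) (by fun_prop)
    (fun s hs => (hy s hs).congr_deriv (by ring)) hb ht.le
  rw [(hy t ht.le).deriv]
  have : 0 < k * (y t - a) * ((b - y t) * (c - y t)) := by positivity
  linarith

theorem strictAntiOn_of_hasDerivAt_cubic (hk : 0 < k)
    (hy : ∀ t ≥ (0 : ℝ), HasDerivAt y (k * (y t - a) * (y t - b) * (y t - c)) t)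
    (hy0 : y 0 ∈ Ioo a c) (hb : b < y 0) : StrictAntiOn y (Ici 0) := by
  refine strictAntiOn_of_deriv_neg (convex_Ici 0)
    (fun t ht => (hy t ht).continuousAt.continuousWithinAt) fun t ht => ?_
  rw [interior_Ici] at ht
  obtain ⟨hat, htc⟩ := mem_Ioo_of_hasDerivAt_cubic hy hy0 ht.le
  have hbt := gt_of_hasDerivAt_mul_sub (q := fun z => k * (z - a) * (z - c)) (by fun_prop)
    (fun s hs => (hy s hs).congr_deriv (by ring)) hb ht.le
  rw [(hy t ht.le).deriv]
  have : 0 < k * (y t - a) * ((y t - b) * (c - y t)) := by positivity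
  linarith

end CubicBarrier

theorem cubic_eq_of_two_roots {α κ ζ₁ ζ₂ : ℝ} (hκ : κ ≠ 0) (hne : ζ₁ ≠ ζ₂)
    (h₁ : 1/2 * ζ₁^3 - ζ₁ + α/κ = 0) (h₂ : 1/2 * ζ₂^3 - ζ₂ + α/κ = 0) (z : ℝ) :
    α - κ * z + κ / 2 * z^3 = κ / 2 * (z - -(ζ₁ + ζ₂)) * (z - ζ₁) * (z - ζ₂) := by
  have hsum : ζ₁^2 + ζ₁ * ζ₂ + ζ₂^2 = 2 := by
    have : (ζ₁ - ζ₂) * (ζ₁^2 + ζ₁ * ζ₂ + ζ₂^2) = (ζ₁ - ζ₂) * 2 := by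
      linear_combination 2 * (h₁ - h₂)
    exact mul_left_cancel₀ (sub_ne_zero.2 hne) this
  have hα : α = κ * (ζ₁ - 1/2 * ζ₁^3) := by
    field_simp at h₁
    linarith
  linear_combination hα + κ / 2 * (z - ζ₁) * hsum

theorem stmt15_general (α κ : ℝ) (hκ : 0 < κ)
    (ζ₁ ζ₂ : ℝ) (hζ₁ : 0 ≤ ζ₁) (hζlt : ζ₁ < ζ₂)
    (hroot₁ : 1/2 * ζ₁^3 - ζ₁ + α/κ = 0)
    (hroot₂ : 1/2 * ζ₂^3 - ζ₂ + α/κ = 0)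
    (y : ℝ → ℝ) (y₀ : ℝ)
    (hy : ∀ t ≥ (0 : ℝ), HasDerivAt y (α - κ * y t + κ / 2 * (y t)^3) t)
    (hy0 : y 0 = y₀) (hy₀0 : 0 ≤ y₀) (hy₀2 : y₀ < ζ₂) :
    (∀ t ≥ (0 : ℝ), y t < ζ₂) ∧
    Filter.Tendsto y Filter.atTop (nhds ζ₁) ∧
    (ζ₁ < y₀ → StrictAntiOn y (Set.Ici (0 : ℝ))) ∧
    (y₀ < ζ₁ → MonotoneOn y (Set.Ici (0 : ℝ))) := by
  have hy' : ∀ t ≥ (0 : ℝ),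
      HasDerivAt y (κ / 2 * (y t - -(ζ₁ + ζ₂)) * (y t - ζ₁) * (y t - ζ₂)) t := fun t ht =>
    (hy t ht).congr_deriv (cubic_eq_of_two_roots hκ.ne' hζlt.ne hroot₁ hroot₂ (y t))
  subst hy0
  have hk : 0 < κ / 2 := half_pos hκ
  have hy0' : y 0 ∈ Ioo (-(ζ₁ + ζ₂)) ζ₂ := ⟨by linarith, hy₀2⟩
  exact ⟨fun t ht => (mem_Ioo_of_hasDerivAt_cubic hy' hy0' ht).2,
    tendsto_of_hasDerivAt_cubic hk (by linarith) hζlt hy' hy0',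
    strictAntiOn_of_hasDerivAt_cubic hk hy' hy0',
    fun h => (strictMonoOn_of_hasDerivAt_cubic hk hy' hy0' h).monotoneOn⟩

/-- dynamics of the barrier ODE `y' = α − κy + (κ/2)y³` with
`κ > (3/2)^{3/2} α ≥ 0` and `y(0) = y₀ ∈ [0, ζ₂)`: the solution stays below `ζ₂`,
converges to `ζ₁`, is strictly decreasing if `y₀ > ζ₁` and nondecreasing if `y₀ < ζ₁`,
where `ζ₁ < ζ₂` are the two nonnegative roots of `½z³ − z + α/κ`. -/
theorem stmt15 (α κ : ℝ) (hα : 0 ≤ α) (hκ : 0 < κ)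
    (hακ : ((3 : ℝ)/2) ^ ((3 : ℝ)/2) * α < κ)
    (ζ₁ ζ₂ : ℝ) (hζ₁ : 0 ≤ ζ₁) (hζlt : ζ₁ < ζ₂)
    (hroot₁ : 1/2 * ζ₁^3 - ζ₁ + α/κ = 0)
    (hroot₂ : 1/2 * ζ₂^3 - ζ₂ + α/κ = 0)
    (y : ℝ → ℝ) (y₀ : ℝ)
    (hy : ∀ t ≥ (0 : ℝ), HasDerivAt y (α - κ * y t + κ / 2 * (y t)^3) t)
    (hy0 : y 0 = y₀) (hy₀0 : 0 ≤ y₀) (hy₀2 : y₀ < ζ₂) :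
    (∀ t ≥ (0 : ℝ), y t < ζ₂) ∧
    Filter.Tendsto y Filter.atTop (nhds ζ₁) ∧
    (ζ₁ < y₀ → StrictAntiOn y (Set.Ici (0 : ℝ))) ∧
    (y₀ < ζ₁ → MonotoneOn y (Set.Ici (0 : ℝ))) :=
  stmt15_general α κ hκ ζ₁ ζ₂ hζ₁ hζlt hroot₁ hroot₂ y y₀ hy hy0 hy₀0 hy₀2
end
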